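/- Let (L,[-,-],{-,-,-}) be a Lie-Yamaguti algebra. If T : L → L is a Rota-Baxter operator of weight -1 on L, then the linear map 2T - id_L is a modified Rota-Baxter operator on L. -/

import Mathlib

/-- A Lie-Yamaguti algebra: bilinear bracket `br`, trilinear bracket `tr`,
satisfying (LY1)-(LY6). -/
structure LieYamaguti (K : Type*) (L : Type*) [Field K] [AddCommGroup L] [Module K L] where
  br : L →ₗ[K] L →ₗ[K] L
  tr : L →ₗ[K] L →ₗ[K] L →ₗ[K] L
  ly1 : ∀ x y, br x y = - br y x
  ly2 : ∀ x y z, tr x y z = - tr y x z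
  ly3 : ∀ x y z,
    br (br x y) z + br (br y z) x + br (br z x) y + tr x y z + tr y z x + tr z x y = 0
  ly4 : ∀ x y z a, tr (br x y) z a + tr (br z x) y a + tr (br y z) x a = 0
  ly5 : ∀ a b x y, tr a b (br x y) = br (tr a b x) y + br x (tr a b y)
  ly6 : ∀ a b x y z,
    tr a b (tr x y z) = tr (tr a b x) y z + tr x (tr a b y) z + tr x y (tr a b z)

/-- A modified Rota-Baxter operator on a Lie-Yamaguti algebra. -/
def IsMRB {K L : Type*} [Field K] [AddCommGroup L] [Module K L]
    (A : LieYamaguti K L) (R : L →ₗ[K] L) : Prop :=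
  (∀ x y, A.br (R x) (R y) = R (A.br (R x) y + A.br x (R y)) - A.br x y) ∧
  (∀ x y z, A.tr (R x) (R y) (R z) =
      R (A.tr x (R y) (R z) + A.tr (R x) y (R z) + A.tr (R x) (R y) z + A.tr x y z)
      - A.tr (R x) y z - A.tr x (R y) z - A.tr x y (R z))

/-- A Rota-Baxter operator of weight -1 on a Lie-Yamaguti algebra. -/
def IsRBWeightNegOne {K L : Type*} [Field K] [AddCommGroup L] [Module K L]
    (A : LieYamaguti K L) (T : L →ₗ[K] L) : Prop :=
  (∀ x y, A.br (T x) (T y) = T (A.br (T x) y + A.br x (T y) - A.br x y)) ∧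
  (∀ x y z, A.tr (T x) (T y) (T z) =
      T (A.tr x (T y) (T z) + A.tr (T x) y (T z) + A.tr (T x) (T y) z
        - A.tr x y (T z) - A.tr (T x) y z - A.tr x (T y) z + A.tr x y z))

/-! Substituting `S = 2T - id` into the modified Rota-Baxter identities for `S` and expanding,
the only terms in which `T` is applied to all arguments of the bracket are four times the left-hand
sides of the weight `-1` Rota-Baxter identities for `T`; replacing them by the right-hand sides,
everything cancels. -/

namespace LinearMap

variable {R M : Type*} [CommRing R] [AddCommGroup M] [Module R M]

theorem modifiedRotaBaxter_bilinear_two_smul_sub_id (β : M →ₗ[R] M →ₗ[R] M) (T : M →ₗ[R] M)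
    (hT : ∀ x y, β (T x) (T y) = T (β (T x) y + β x (T y) - β x y)) (x y : M) :
    let S := (2 : R) • T - LinearMap.id
    β (S x) (S y) = S (β (S x) y + β x (S y)) - β x y := by
  simp only [sub_apply, smul_apply, id_apply, map_sub, map_add, map_smul, hT]
  module

theorem modifiedRotaBaxter_trilinear_two_smul_sub_id (τ : M →ₗ[R] M →ₗ[R] M →ₗ[R] M)
    (T : M →ₗ[R] M)
    (hT : ∀ x y z, τ (T x) (T y) (T z) =
      T (τ x (T y) (T z) + τ (T x) y (T z) + τ (T x) (T y) z
        - τ x y (T z) - τ (T x) y z - τ x (T y) z + τ x y z))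
    (x y z : M) :
    let S := (2 : R) • T - LinearMap.id
    τ (S x) (S y) (S z) =
      S (τ x (S y) (S z) + τ (S x) y (S z) + τ (S x) (S y) z + τ x y z)
        - τ (S x) y z - τ x (S y) z - τ x y (S z) := by
  simp only [sub_apply, smul_apply, id_apply, map_sub, map_add, map_smul, hT]
  module

end LinearMap

theorem isMRB_two_smul_sub_id_general (K L : Type*) [Field K]
    [AddCommGroup L] [Module K L]
    (A : LieYamaguti K L) (T : L →ₗ[K] L) (hT : IsRBWeightNegOne A T) :
    IsMRB A ((2 : K) • T - LinearMap.id) :=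
  ⟨LinearMap.modifiedRotaBaxter_bilinear_two_smul_sub_id A.br T hT.1,
    LinearMap.modifiedRotaBaxter_trilinear_two_smul_sub_id A.tr T hT.2⟩

/-- If `T` is a Rota-Baxter operator of weight -1 on a Lie-Yamaguti algebra, then
`2T - id` is a modified Rota-Baxter operator. -/
theorem isMRB_two_smul_sub_id (K L : Type*) [Field K] [CharZero K]
    [AddCommGroup L] [Module K L]
    (A : LieYamaguti K L) (T : L →ₗ[K] L) (hT : IsRBWeightNegOne A T) :
    IsMRB A ((2 : K) • T - LinearMap.id) :=
  isMRB_two_smul_sub_id_general K L A T hT
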